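/- arXiv:2105.12516 — 2 statements merged into one kernel-verified Lean document; each statement's English description precedes it below -/
import Mathlib

section
/- Let n, m be positive integers, let K be an n×n real symmetric positive-definite matrix, let R be an invertible n×n real matrix with R Rᵀ = K, let Φ be an m×n real matrix, let y ∈ ℝᵐ, and let λ > 0. Define the regularized least-squares estimate g^Reg := (ΦᵀΦ + λK⁻¹)⁻¹ Φᵀ y. Assume g^Reg ≠ 0 and Φ g^Reg ≠ y. Then there exists ρ > 0 such that g^Reg is a global minimizer of the robust least-squares objective g ↦ sup{ ‖(Φ + Δ)g − y‖ : Δ ∈ ℝ^{m×n}, ‖ΔR‖_F ≤ ρ }, i.e., for every g ∈ ℝⁿ, sup over {Δ : ‖ΔR‖_F ≤ ρ} of ‖(Φ + Δ)g^Reg − y‖ is at most the sup over {Δ : ‖ΔR‖_F ≤ ρ} of ‖(Φ + Δ)g − y‖. -/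
open Matrix
open scoped BigOperators

/-- Euclidean norm of a real vector. -/
noncomputable def euclNorm {k : ℕ} (v : Fin k → ℝ) : ℝ :=
  Real.sqrt (∑ i, (v i) ^ 2)

/-- Frobenius norm of a real matrix. -/
noncomputable def frobNorm {m n : ℕ} (A : Matrix (Fin m) (Fin n) ℝ) : ℝ :=
  Real.sqrt (∑ i, ∑ j, (A i j) ^ 2)

/-!
Write `r = Φ g − y` and `s = R⁻¹ g` for `g = gReg`. The normal equations say
`Φᵀ r + λ R⁻ᵀ s = 0`. For `Δ` in the ball of radius `ρ = λ‖s‖/‖r‖`, the residual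
`(Φ + Δ) g − y = r + (ΔR) s` has norm at most `‖r‖ + ρ‖s‖`. Conversely, with unit vectors
`u = r/‖r‖`, `w = s/‖s‖`, the rank-one perturbation `Δ₀ = ρ u wᵀ R⁻¹` lies in the ball and
satisfies `((Φ + Δ₀) g' − y) ⬝ u = g' ⬝ (Φᵀ u + ρ R⁻ᵀ w) − y ⬝ u = ‖r‖ + ρ‖s‖` for *every* `g'`,
because the normal equations make `Φᵀ u + ρ R⁻ᵀ w` vanish. So every `g'` has worst-case
residual at least `‖r‖ + ρ‖s‖`, the worst-case residual of `gReg`.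
-/

lemma euclNorm_eq_norm {k : ℕ} (v : Fin k → ℝ) :
    euclNorm v = ‖(WithLp.toLp 2 v : EuclideanSpace ℝ (Fin k))‖ := by
  simp [euclNorm, EuclideanSpace.norm_eq]

lemma euclNorm_nonneg {k : ℕ} (v : Fin k → ℝ) : 0 ≤ euclNorm v :=
  Real.sqrt_nonneg _

lemma euclNorm_add_le {k : ℕ} (v w : Fin k → ℝ) :
    euclNorm (v + w) ≤ euclNorm v + euclNorm w := by
  simpa only [euclNorm_eq_norm, WithLp.toLp_add] using
    norm_add_le (WithLp.toLp 2 v : EuclideanSpace ℝ (Fin k)) (WithLp.toLp 2 w)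

lemma dotProduct_le_euclNorm_mul {k : ℕ} (v w : Fin k → ℝ) :
    v ⬝ᵥ w ≤ euclNorm v * euclNorm w := by
  simpa [euclNorm_eq_norm, EuclideanSpace.inner_eq_star_dotProduct, dotProduct_comm] using
    real_inner_le_norm (WithLp.toLp 2 v : EuclideanSpace ℝ (Fin k)) (WithLp.toLp 2 w)

lemma euclNorm_pos {k : ℕ} {v : Fin k → ℝ} (hv : v ≠ 0) : 0 < euclNorm v := by
  rw [euclNorm_eq_norm, norm_pos_iff, Ne, WithLp.toLp_eq_zero]
  exact hv

lemma euclNorm_smul_inv_euclNorm {k : ℕ} {v : Fin k → ℝ} (hv : v ≠ 0) :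
    euclNorm ((euclNorm v)⁻¹ • v) = 1 := by
  rw [euclNorm_eq_norm, WithLp.toLp_smul, norm_smul, Real.norm_eq_abs, abs_inv,
    abs_of_pos (euclNorm_pos hv), ← euclNorm_eq_norm, inv_mul_cancel₀ (euclNorm_pos hv).ne']

lemma dotProduct_self_eq_euclNorm_sq {k : ℕ} (v : Fin k → ℝ) : v ⬝ᵥ v = euclNorm v ^ 2 := by
  rw [euclNorm, Real.sq_sqrt (by positivity)]
  simp only [dotProduct, sq]

lemma inv_euclNorm_smul_dotProduct_self {k : ℕ} (v : Fin k → ℝ) :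
    (euclNorm v)⁻¹ • v ⬝ᵥ v = euclNorm v := by
  rw [smul_dotProduct, smul_eq_mul, dotProduct_self_eq_euclNorm_sq]
  rcases eq_or_ne (euclNorm v) 0 with h | h
  · simp [h]
  · field_simp

section Frobenius

attribute [local instance] Matrix.frobeniusNormedAddCommGroup Matrix.frobeniusNormedSpace

lemma frobNorm_eq_norm {m n : ℕ} (A : Matrix (Fin m) (Fin n) ℝ) : frobNorm A = ‖A‖ := by
  rw [frobNorm, frobenius_norm_def, Real.sqrt_eq_rpow]
  congr 1
  refine Finset.sum_congr rfl fun i _ => Finset.sum_congr rfl fun j _ => ?_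
  rw [Real.rpow_two, Real.norm_eq_abs, sq_abs]

lemma euclNorm_mulVec_le {m n : ℕ} (A : Matrix (Fin m) (Fin n) ℝ) (x : Fin n → ℝ) :
    euclNorm (A *ᵥ x) ≤ frobNorm A * euclNorm x := by
  simpa only [euclNorm_eq_norm, frobNorm_eq_norm, ← frobenius_norm_replicateCol (ι := Unit),
    replicateCol_mulVec] using frobenius_norm_mul A (replicateCol Unit x)

lemma frobNorm_smul {m n : ℕ} (c : ℝ) (A : Matrix (Fin m) (Fin n) ℝ) :
    frobNorm (c • A) = |c| * frobNorm A := by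
  rw [frobNorm_eq_norm, frobNorm_eq_norm, norm_smul, Real.norm_eq_abs]

end Frobenius

lemma frobNorm_vecMulVec {m n : ℕ} (u : Fin m → ℝ) (w : Fin n → ℝ) :
    frobNorm (vecMulVec u w) = euclNorm u * euclNorm w := by
  rw [frobNorm, euclNorm, euclNorm, ← Real.sqrt_mul (by positivity), Finset.sum_mul_sum]
  simp only [vecMulVec_apply, mul_pow]

noncomputable def robustResidual {m n : ℕ} (Φ : Matrix (Fin m) (Fin n) ℝ) (y : Fin m → ℝ)
    (R : Matrix (Fin n) (Fin n) ℝ) (ρ : ℝ) (g : Fin n → ℝ) : ℝ :=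
  sSup ((fun Δ => euclNorm ((Φ + Δ) *ᵥ g - y)) ''
    {Δ : Matrix (Fin m) (Fin n) ℝ | frobNorm (Δ * R) ≤ ρ})

lemma csSup_image_le_csSup_image {α β : Type*} [ConditionallyCompleteLattice β] {S : Set α}
    {f g : α → β} {c : β} (hS : S.Nonempty) (hf : ∀ x ∈ S, f x ≤ c) (hg : ∃ x ∈ S, c ≤ g x)
    (hbdd : BddAbove (g '' S)) : sSup (f '' S) ≤ sSup (g '' S) := by
  obtain ⟨x₀, hx₀, hc⟩ := hg
  refine csSup_le (hS.image f) ?_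
  rintro _ ⟨x, hx, rfl⟩
  exact (hf x hx).trans (hc.trans (le_csSup hbdd ⟨x₀, hx₀, rfl⟩))

section RobustResidual

variable {m n : ℕ} (Φ : Matrix (Fin m) (Fin n) ℝ) (y : Fin m → ℝ) {R : Matrix (Fin n) (Fin n) ℝ}

lemma euclNorm_perturbed_residual_le (hR : IsUnit R.det) {Δ : Matrix (Fin m) (Fin n) ℝ}
    {ρ : ℝ} (hΔ : frobNorm (Δ * R) ≤ ρ) (g : Fin n → ℝ) :
    euclNorm ((Φ + Δ) *ᵥ g - y) ≤ euclNorm (Φ *ᵥ g - y) + ρ * euclNorm (R⁻¹ *ᵥ g) := by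
  have hsplit : (Φ + Δ) *ᵥ g - y = (Φ *ᵥ g - y) + (Δ * R) *ᵥ (R⁻¹ *ᵥ g) := by
    rw [mulVec_mulVec, Matrix.mul_assoc, mul_nonsing_inv R hR, Matrix.mul_one, add_mulVec]
    abel
  calc euclNorm ((Φ + Δ) *ᵥ g - y)
      ≤ euclNorm (Φ *ᵥ g - y) + euclNorm ((Δ * R) *ᵥ (R⁻¹ *ᵥ g)) :=
        hsplit ▸ euclNorm_add_le _ _
    _ ≤ euclNorm (Φ *ᵥ g - y) + ρ * euclNorm (R⁻¹ *ᵥ g) := by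
        gcongr
        exact (euclNorm_mulVec_le _ _).trans (by gcongr; exact euclNorm_nonneg _)

lemma bddAbove_perturbed_residual (hR : IsUnit R.det) (ρ : ℝ) (g : Fin n → ℝ) :
    BddAbove ((fun Δ => euclNorm ((Φ + Δ) *ᵥ g - y)) ''
      {Δ : Matrix (Fin m) (Fin n) ℝ | frobNorm (Δ * R) ≤ ρ}) := by
  refine ⟨euclNorm (Φ *ᵥ g - y) + ρ * euclNorm (R⁻¹ *ᵥ g), ?_⟩
  rintro _ ⟨Δ, hΔ, rfl⟩
  exact euclNorm_perturbed_residual_le Φ y hR hΔ g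

lemma neg_dotProduct_le_euclNorm_perturbed_residual {u : Fin m → ℝ} {w : Fin n → ℝ} {ρ : ℝ}
    (hu : euclNorm u = 1) (hcert : Φᵀ *ᵥ u + ρ • ((R⁻¹)ᵀ *ᵥ w) = 0) (g : Fin n → ℝ) :
    -(y ⬝ᵥ u) ≤ euclNorm ((Φ + ρ • (vecMulVec u w * R⁻¹)) *ᵥ g - y) := by
  have hcert_g := congrArg (g ⬝ᵥ ·) hcert
  simp only [dotProduct_add, dotProduct_smul, dotProduct_zero, dotProduct_transpose_mulVec,
    smul_eq_mul] at hcert_g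
  have huu : u ⬝ᵥ u = 1 := by rw [dotProduct_self_eq_euclNorm_sq, hu, one_pow]
  have hdot : ((Φ + ρ • (vecMulVec u w * R⁻¹)) *ᵥ g - y) ⬝ᵥ u = -(y ⬝ᵥ u) := by
    simp only [add_mulVec, smul_mulVec, ← mulVec_mulVec, vecMulVec_mulVec, op_smul_eq_smul,
      sub_dotProduct, add_dotProduct, smul_dotProduct, huu, smul_eq_mul, mul_one, sub_eq_neg_self]
    rwa [dotProduct_comm (Φ *ᵥ g)]
  calc -(y ⬝ᵥ u) = ((Φ + ρ • (vecMulVec u w * R⁻¹)) *ᵥ g - y) ⬝ᵥ u := hdot.symm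
    _ ≤ euclNorm ((Φ + ρ • (vecMulVec u w * R⁻¹)) *ᵥ g - y) :=
        (dotProduct_le_euclNorm_mul _ u).trans_eq (by rw [hu, mul_one])

theorem exists_robustResidual_le_of_stationary (hR : IsUnit R.det) {g₀ : Fin n → ℝ} {lam : ℝ}
    (hlam : 0 < lam) (hr : Φ *ᵥ g₀ - y ≠ 0) (hs : R⁻¹ *ᵥ g₀ ≠ 0)
    (hstat : Φᵀ *ᵥ (Φ *ᵥ g₀ - y) + lam • ((R⁻¹)ᵀ *ᵥ (R⁻¹ *ᵥ g₀)) = 0) :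
    ∃ ρ : ℝ, 0 < ρ ∧ ∀ g, robustResidual Φ y R ρ g₀ ≤ robustResidual Φ y R ρ g := by
  set r := Φ *ᵥ g₀ - y
  set s := R⁻¹ *ᵥ g₀ with hs_def
  have hr_pos := euclNorm_pos hr
  have hs_pos := euclNorm_pos hs
  set ρ := lam * euclNorm s / euclNorm r
  have hρ : 0 < ρ := by positivity
  set u := (euclNorm r)⁻¹ • r
  set w := (euclNorm s)⁻¹ • s
  have hcert : Φᵀ *ᵥ u + ρ • ((R⁻¹)ᵀ *ᵥ w) = 0 := by
    have hρw : ρ • ((R⁻¹)ᵀ *ᵥ w) = (euclNorm r)⁻¹ • lam • ((R⁻¹)ᵀ *ᵥ s) := by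
      rw [mulVec_smul, smul_smul, smul_smul]
      congr 1
      simp only [ρ]
      field_simp
    rw [mulVec_smul, hρw, ← smul_add, hstat, smul_zero]
  have hvalue : -(y ⬝ᵥ u) = euclNorm r + ρ * euclNorm s := by
    have hcert_g₀ := congrArg (g₀ ⬝ᵥ ·) hcert
    simp only [dotProduct_add, dotProduct_smul, dotProduct_zero, dotProduct_transpose_mulVec,
      smul_eq_mul] at hcert_g₀
    have hur : u ⬝ᵥ r = euclNorm r := inv_euclNorm_smul_dotProduct_self r
    have hws : w ⬝ᵥ s = euclNorm s := inv_euclNorm_smul_dotProduct_self s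
    rw [← hs_def, show Φ *ᵥ g₀ = r + y by simp [r], dotProduct_add, hur, hws] at hcert_g₀
    linarith [dotProduct_comm u y]
  set Δ₀ := ρ • (vecMulVec u w * R⁻¹)
  have hΔ₀ : frobNorm (Δ₀ * R) ≤ ρ := by
    rw [smul_mul, Matrix.mul_assoc, nonsing_inv_mul R hR, Matrix.mul_one, frobNorm_smul,
      frobNorm_vecMulVec, euclNorm_smul_inv_euclNorm hr, euclNorm_smul_inv_euclNorm hs,
      abs_of_pos hρ, mul_one, mul_one]
  refine ⟨ρ, hρ, fun g => csSup_image_le_csSup_image (c := euclNorm r + ρ * euclNorm s)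
    ⟨Δ₀, hΔ₀⟩ (fun Δ hΔ => ?_) ⟨Δ₀, hΔ₀, ?_⟩ (bddAbove_perturbed_residual Φ y hR ρ g)⟩
  · exact euclNorm_perturbed_residual_le Φ y hR hΔ g₀
  · exact hvalue ▸ neg_dotProduct_le_euclNorm_perturbed_residual Φ y
      (euclNorm_smul_inv_euclNorm hr) hcert g

end RobustResidual

theorem regLS_solves_robust_LS_general
    (n m : ℕ)
    (K R : Matrix (Fin n) (Fin n) ℝ) (hK : K.PosDef)
    (hR : IsUnit R.det) (hRK : R * Rᵀ = K)
    (Φ : Matrix (Fin m) (Fin n) ℝ) (y : Fin m → ℝ)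
    (lam : ℝ) (hlam : 0 < lam)
    (gReg : Fin n → ℝ)
    (hgReg : gReg = (Φᵀ * Φ + lam • K⁻¹)⁻¹ *ᵥ (Φᵀ *ᵥ y))
    (hg0 : gReg ≠ 0) (hgy : Φ *ᵥ gReg ≠ y) :
    ∃ ρ : ℝ, 0 < ρ ∧ ∀ g : Fin n → ℝ,
      sSup ((fun Δ => euclNorm ((Φ + Δ) *ᵥ gReg - y)) ''
          {Δ : Matrix (Fin m) (Fin n) ℝ | frobNorm (Δ * R) ≤ ρ}) ≤
        sSup ((fun Δ => euclNorm ((Φ + Δ) *ᵥ g - y)) ''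
          {Δ : Matrix (Fin m) (Fin n) ℝ | frobNorm (Δ * R) ≤ ρ}) := by
  have hA : (Φᵀ * Φ + lam • K⁻¹).PosDef := by
    have hΦ : (Φᵀ * Φ).PosSemidef := by
      simpa only [conjTranspose_eq_transpose_of_trivial] using posSemidef_conjTranspose_mul_self Φ
    exact PosDef.posSemidef_add hΦ (hK.inv.smul hlam)
  have hKinv : K⁻¹ = (R⁻¹)ᵀ * R⁻¹ := by
    rw [← hRK, Matrix.mul_inv_rev, transpose_nonsing_inv]
  have hnormal : (Φᵀ * Φ + lam • K⁻¹) *ᵥ gReg = Φᵀ *ᵥ y := by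
    rw [hgReg, mulVec_mulVec, mul_nonsing_inv _ ((isUnit_iff_isUnit_det _).1 hA.isUnit),
      one_mulVec]
  have hstat : Φᵀ *ᵥ (Φ *ᵥ gReg - y) + lam • ((R⁻¹)ᵀ *ᵥ (R⁻¹ *ᵥ gReg)) = 0 := by
    rw [add_mulVec, smul_mulVec, hKinv, ← mulVec_mulVec, ← mulVec_mulVec] at hnormal
    rw [mulVec_sub, ← hnormal]
    abel
  have hRinv : IsUnit R⁻¹ := isUnit_nonsing_inv_iff.2 ((isUnit_iff_isUnit_det R).2 hR)
  have hs : R⁻¹ *ᵥ gReg ≠ 0 :=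
    ((mulVec_injective_iff_isUnit.2 hRinv).ne_iff' (mulVec_zero _)).2 hg0
  exact exists_robustResidual_le_of_stationary Φ y hR hlam (sub_ne_zero.2 hgy) hs hstat

/-- Theorem 1: the kernel-based regularized least-squares estimate is a global
minimizer of a robust least-squares objective with kernel-based uncertainty set. -/
theorem regLS_solves_robust_LS
    (n m : ℕ) (hn : 0 < n) (hm : 0 < m)
    (K R : Matrix (Fin n) (Fin n) ℝ) (hK : K.PosDef)
    (hR : IsUnit R.det) (hRK : R * Rᵀ = K)
    (Φ : Matrix (Fin m) (Fin n) ℝ) (y : Fin m → ℝ)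
    (lam : ℝ) (hlam : 0 < lam)
    (gReg : Fin n → ℝ)
    (hgReg : gReg = (Φᵀ * Φ + lam • K⁻¹)⁻¹ *ᵥ (Φᵀ *ᵥ y))
    (hg0 : gReg ≠ 0) (hgy : Φ *ᵥ gReg ≠ y) :
    ∃ ρ : ℝ, 0 < ρ ∧ ∀ g : Fin n → ℝ,
      sSup ((fun Δ => euclNorm ((Φ + Δ) *ᵥ gReg - y)) ''
          {Δ : Matrix (Fin m) (Fin n) ℝ | frobNorm (Δ * R) ≤ ρ}) ≤
        sSup ((fun Δ => euclNorm ((Φ + Δ) *ᵥ g - y)) ''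
          {Δ : Matrix (Fin m) (Fin n) ℝ | frobNorm (Δ * R) ≤ ρ}) :=
  regLS_solves_robust_LS_general n m K R hK hR hRK Φ y lam hlam gReg hgReg hg0 hgy
end

section
/- Let n, m be positive integers, let K be an n×n real symmetric positive-definite matrix, let R be an invertible n×n real matrix with R Rᵀ = K, let Φ be an m×n real matrix, let y ∈ ℝᵐ, and let ρ > 0. Suppose g* ∈ ℝⁿ is a global minimizer of the convex function g ↦ ‖Φg − y‖ + ρ‖R⁻¹g‖, and assume g* ≠ 0 and Φg* ≠ y. Then, with μ := ρ‖y − Φg*‖ / ‖R⁻¹g*‖, the optimality condition ΦᵀΦ g* + μ K⁻¹ g* = Φᵀ y holds; equivalently, g* = (ΦᵀΦ + μK⁻¹)⁻¹ Φᵀ y. -/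
/-!
Where `Φ g* ≠ y` and `R⁻¹ g* ≠ 0` both norms are differentiable at `g*`, so every directional
derivative of the objective vanishes there:
`Φᵀ(Φg* − y) / ‖Φg* − y‖ + ρ R⁻ᵀR⁻¹ g* / ‖R⁻¹g*‖ = 0`.
Multiplying by `‖Φg* − y‖` and using `R⁻ᵀR⁻¹ = (RRᵀ)⁻¹ = K⁻¹` gives the normal equations, and
`ΦᵀΦ + μK⁻¹` is positive definite for `μ > 0`, hence invertible.
-/

open Matrix
open scoped BigOperators

lemma euclNorm_eq_norm_toLp {k : ℕ} (v : Fin k → ℝ) : euclNorm v = ‖WithLp.toLp 2 v‖ := by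
  simp [euclNorm, EuclideanSpace.norm_eq]

lemma euclNorm_sub_comm {k : ℕ} (a b : Fin k → ℝ) : euclNorm (a - b) = euclNorm (b - a) := by
  simp only [euclNorm_eq_norm_toLp, WithLp.toLp_sub, norm_sub_rev]

lemma hasDerivAt_euclNorm_add_smul {k : ℕ} {a : Fin k → ℝ} (b : Fin k → ℝ) (ha : a ≠ 0) :
    HasDerivAt (fun t : ℝ => euclNorm (a + t • b)) (a ⬝ᵥ b / euclNorm a) 0 := by
  have hline : HasDerivAt (fun t : ℝ => WithLp.toLp 2 (a + t • b)) (WithLp.toLp 2 b) 0 := by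
    simpa using ((hasDerivAt_id (0 : ℝ)).smul_const (WithLp.toLp 2 b)).const_add (WithLp.toLp 2 a)
  have hsq := hline.norm_sq.sqrt (by simpa using ha)
  simp only [Real.sqrt_sq (norm_nonneg _), zero_smul, add_zero,
    EuclideanSpace.inner_toLp_toLp, star_trivial] at hsq
  simp only [euclNorm_eq_norm_toLp]
  convert hsq using 1
  rw [dotProduct_comm]
  ring

lemma transpose_mulVec_dotProduct {m n : Type*} [Fintype m] [Fintype n]
    (A : Matrix m n ℝ) (r : m → ℝ) (v : n → ℝ) : (Aᵀ *ᵥ r) ⬝ᵥ v = r ⬝ᵥ (A *ᵥ v) := by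
  rw [mulVec_transpose, dotProduct_mulVec]

section Stationarity

variable {m n p : ℕ} (A : Matrix (Fin m) (Fin n) ℝ) (B : Matrix (Fin p) (Fin n) ℝ)
  (c : Fin m → ℝ) (ρ : ℝ) {x : Fin n → ℝ}

lemma dotProduct_add_dotProduct_eq_zero_of_isMinOn
    (hmin : IsMinOn (fun g => euclNorm (A *ᵥ g - c) + ρ * euclNorm (B *ᵥ g)) Set.univ x)
    (hres : A *ᵥ x ≠ c) (hBx : B *ᵥ x ≠ 0) (v : Fin n → ℝ) :
    (A *ᵥ x - c) ⬝ᵥ (A *ᵥ v) / euclNorm (A *ᵥ x - c)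
      + ρ * ((B *ᵥ x) ⬝ᵥ (B *ᵥ v) / euclNorm (B *ᵥ x)) = 0 := by
  have hderiv := (hasDerivAt_euclNorm_add_smul (A *ᵥ v) (sub_ne_zero.mpr hres)).add
    ((hasDerivAt_euclNorm_add_smul (B *ᵥ v) hBx).const_mul ρ)
  refine IsLocalMin.hasDerivAt_eq_zero ?_ hderiv
  refine Filter.Eventually.of_forall fun t => ?_
  simpa [mulVec_add, mulVec_smul, sub_add_eq_add_sub] using isMinOn_univ_iff.mp hmin (x + t • v)

theorem transpose_mulVec_add_smul_eq_zero_of_isMinOn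
    (hmin : IsMinOn (fun g => euclNorm (A *ᵥ g - c) + ρ * euclNorm (B *ᵥ g)) Set.univ x)
    (hres : A *ᵥ x ≠ c) (hBx : B *ᵥ x ≠ 0) :
    Aᵀ *ᵥ (A *ᵥ x - c)
      + (ρ * euclNorm (A *ᵥ x - c) / euclNorm (B *ᵥ x)) • ((Bᵀ * B) *ᵥ x) = 0 := by
  set w := Aᵀ *ᵥ (A *ᵥ x - c)
      + (ρ * euclNorm (A *ᵥ x - c) / euclNorm (B *ᵥ x)) • ((Bᵀ * B) *ᵥ x)
  have hres_pos := euclNorm_pos (sub_ne_zero.mpr hres)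
  have hw : w ⬝ᵥ w = 0 := by
    have h := dotProduct_add_dotProduct_eq_zero_of_isMinOn A B c ρ hmin hres hBx w
    rw [add_dotProduct, smul_dotProduct, ← mulVec_mulVec, transpose_mulVec_dotProduct,
      transpose_mulVec_dotProduct, smul_eq_mul]
    field_simp at h ⊢
    linear_combination h
  exact dotProduct_self_eq_zero.mp hw

end Stationarity

lemma posDef_transpose_mul_self_add_smul {n m : Type*} [Fintype n] [Fintype m] [DecidableEq n]
    (Φ : Matrix m n ℝ) {P : Matrix n n ℝ} (hP : P.PosDef) {μ : ℝ} (hμ : 0 < μ) :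
    (Φᵀ * Φ + μ • P).PosDef := by
  have hΦ : (Φᵀ * Φ).PosSemidef := by
    simpa only [conjTranspose_eq_transpose_of_trivial] using posSemidef_conjTranspose_mul_self Φ
  exact PosDef.posSemidef_add hΦ (hP.smul hμ)

theorem robust_minimizer_is_regularized_estimate_general
    (n m : ℕ)
    (K R : Matrix (Fin n) (Fin n) ℝ) (hK : K.PosDef)
    (hR : IsUnit R.det) (hRK : R * Rᵀ = K)
    (Φ : Matrix (Fin m) (Fin n) ℝ) (y : Fin m → ℝ)
    (ρ : ℝ) (hρ : 0 < ρ)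
    (gstar : Fin n → ℝ)
    (hmin : ∀ g : Fin n → ℝ,
      euclNorm (Φ *ᵥ gstar - y) + ρ * euclNorm (R⁻¹ *ᵥ gstar) ≤
        euclNorm (Φ *ᵥ g - y) + ρ * euclNorm (R⁻¹ *ᵥ g))
    (hg0 : gstar ≠ 0) (hgy : Φ *ᵥ gstar ≠ y)
    (μ : ℝ)
    (hμ : μ = ρ * euclNorm (y - Φ *ᵥ gstar) / euclNorm (R⁻¹ *ᵥ gstar)) :
    (Φᵀ * Φ) *ᵥ gstar + μ • (K⁻¹ *ᵥ gstar) = Φᵀ *ᵥ y ∧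
      gstar = (Φᵀ * Φ + μ • K⁻¹)⁻¹ *ᵥ (Φᵀ *ᵥ y) := by
  have hRg : R⁻¹ *ᵥ gstar ≠ 0 := fun h => hg0 <| by
    rw [← one_mulVec gstar, ← mul_nonsing_inv R hR, ← mulVec_mulVec, h, mulVec_zero]
  have hKinv : (R⁻¹)ᵀ * R⁻¹ = K⁻¹ := by
    rw [← hRK, Matrix.mul_inv_rev, transpose_nonsing_inv]
  have hstat := transpose_mulVec_add_smul_eq_zero_of_isMinOn Φ R⁻¹ y ρ
    (isMinOn_univ_iff.mpr hmin) hgy hRg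
  rw [hKinv, euclNorm_sub_comm, ← hμ, mulVec_sub, mulVec_mulVec] at hstat
  have hnormal : (Φᵀ * Φ) *ᵥ gstar + μ • (K⁻¹ *ᵥ gstar) = Φᵀ *ᵥ y := by
    linear_combination (norm := module) hstat
  have hμpos : 0 < μ := by
    have := euclNorm_pos (sub_ne_zero.mpr hgy.symm)
    have := euclNorm_pos hRg
    rw [hμ]
    positivity
  have hM := posDef_transpose_mul_self_add_smul Φ hK.inv hμpos
  let _ := hM.isUnit.invertible
  refine ⟨hnormal, (inv_mulVec_eq_vec ?_).symm⟩
  rw [add_mulVec, smul_mulVec, hnormal]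

/-- Stationarity characterization from the proof of Theorem 1: a minimizer g*
of g ↦ ‖Φg − y‖ + ρ‖R⁻¹g‖ with g* ≠ 0 and Φg* ≠ y satisfies
ΦᵀΦg* + μK⁻¹g* = Φᵀy with μ = ρ‖y − Φg*‖/‖R⁻¹g*‖; equivalently
g* = (ΦᵀΦ + μK⁻¹)⁻¹Φᵀy. -/
theorem robust_minimizer_is_regularized_estimate
    (n m : ℕ) (hn : 0 < n) (hm : 0 < m)
    (K R : Matrix (Fin n) (Fin n) ℝ) (hK : K.PosDef)
    (hR : IsUnit R.det) (hRK : R * Rᵀ = K)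
    (Φ : Matrix (Fin m) (Fin n) ℝ) (y : Fin m → ℝ)
    (ρ : ℝ) (hρ : 0 < ρ)
    (gstar : Fin n → ℝ)
    (hmin : ∀ g : Fin n → ℝ,
      euclNorm (Φ *ᵥ gstar - y) + ρ * euclNorm (R⁻¹ *ᵥ gstar) ≤
        euclNorm (Φ *ᵥ g - y) + ρ * euclNorm (R⁻¹ *ᵥ g))
    (hg0 : gstar ≠ 0) (hgy : Φ *ᵥ gstar ≠ y)
    (μ : ℝ)
    (hμ : μ = ρ * euclNorm (y - Φ *ᵥ gstar) / euclNorm (R⁻¹ *ᵥ gstar)) :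
    (Φᵀ * Φ) *ᵥ gstar + μ • (K⁻¹ *ᵥ gstar) = Φᵀ *ᵥ y ∧
      gstar = (Φᵀ * Φ + μ • K⁻¹)⁻¹ *ᵥ (Φᵀ *ᵥ y) :=
  robust_minimizer_is_regularized_estimate_general n m K R hK hR hRK Φ y ρ hρ gstar hmin hg0 hgy μ
    hμ
end
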